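/- (§4.3, stability forces the three smallest points to be consecutive vertices.) Let (V₀, …, V₁₁) be a stable 12-gon of type E6 with inner points W_j. Then there exists m ∈ ℤ/12 such that each of V_m, V_{m+1}, V_{m+2} is smaller, in the order on ℂ, than every W_k (k ∈ ℤ/12) and than every V_i with i ∉ {m, m+1, m+2}. In particular, at least three of the vertices V_j are smaller than all the points W_k, and the three smallest of the 24 points {V_j} ∪ {W_j} are three consecutive vertices of the 12-gon. -/
import Mathlib


noncomputable section

/-- The (strict) total order on `ℂ`: compare imaginary parts first, then real parts. -/
def cLt (a b : ℂ) : Prop := a.im < b.im ∨ (a.im = b.im ∧ a.re < b.re)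

/-- The corresponding non-strict order on `ℂ`. -/
def cLe (a b : ℂ) : Prop := cLt a b ∨ a = b

/-- `cross u v = Im (conj u * v)`. -/
def cross (u v : ℂ) : ℝ := ((starRingEnd ℂ) u * v).im

/-- A positively convex `h`-gon: every other vertex lies strictly to the left of each
directed edge from `V (j-1)` to `V j`. -/
def PosConvex {h : ℕ} (V : ZMod h → ℂ) : Prop :=
  ∀ j i : ZMod h, i ≠ j - 1 → i ≠ j →
    0 < cross (V j - V (j - 1)) (V i - V (j - 1))

/-- The (open) level-`s` diagonal-gon of an `h`-gon. -/
def DiagGon {h : ℕ} (V : ZMod h → ℂ) (s : ℕ) : Set ℂ :=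
  {P : ℂ | ∀ j : ZMod h, 0 < cross (V (j + (s : ZMod h)) - V j) (P - V j)}

/-- Edge vectors of an `h`-gon. -/
def zEdge {h : ℕ} (V : ZMod h → ℂ) (j : ZMod h) : ℂ := V j - V (j - 1)

/-- A 12-gon of type E6: the edge vectors satisfy the two families of linear relations. -/
def IsE6Gon (V : ZMod 12 → ℂ) : Prop :=
  ∀ j : ZMod 12,
    zEdge V j + zEdge V (j + 4) + zEdge V (j + 8) = 0 ∧
    zEdge V j - zEdge V (j - 3) + zEdge V (j - 6) - zEdge V (j - 9) = 0

/-- The inner points `W j` of a 12-gon of type E6. -/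
def WE6 (V : ZMod 12 → ℂ) (j : ZMod 12) : ℂ := V j + zEdge V (j + 4)

/-- A stable 12-gon of type E6. -/
def IsStableE6Gon (V : ZMod 12 → ℂ) : Prop :=
  IsE6Gon V ∧ PosConvex V ∧ ∀ j : ZMod 12, WE6 V j ∈ DiagGon V 3

lemma cross_eval (u v : ℂ) : cross u v = u.re * v.im - u.im * v.re := by
  simp [cross, Complex.mul_im]; ring

lemma cLt_iff {a b : ℂ} : cLt a b ↔ (a.im < b.im ∨ (a.im = b.im ∧ a.re < b.re)) := Iff.rfl

lemma cLt_zero_iff {a : ℂ} : cLt 0 a ↔ (0 < a.im ∨ (0 = a.im ∧ 0 < a.re)) := by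
  simp [cLt]

lemma zero_cLt_iff {a : ℂ} : cLt a 0 ↔ (a.im < 0 ∨ (a.im = 0 ∧ a.re < 0)) := by
  simp [cLt]

lemma cLt_trans {a b c : ℂ} (h1 : cLt a b) (h2 : cLt b c) : cLt a c := by
  rcases h1 with h1 | ⟨h1, h1'⟩ <;> rcases h2 with h2 | ⟨h2, h2'⟩ <;>
    simp only [cLt] <;> [left; left; left; right] <;>
    first
      | (constructor <;> linarith)
      | linarith

lemma cLt_irrefl (a : ℂ) : ¬ cLt a a := by simp [cLt]

lemma cLt_asymm {a b : ℂ} (h1 : cLt a b) (h2 : cLt b a) : False := by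
  rcases h1 with h1 | ⟨h1, h1'⟩ <;> rcases h2 with h2 | ⟨h2, h2'⟩ <;> linarith

lemma cLt_total {a b : ℂ} (h : a ≠ b) : cLt a b ∨ cLt b a := by
  rcases lt_trichotomy a.im b.im with h1 | h1 | h1
  · exact Or.inl (Or.inl h1)
  · rcases lt_trichotomy a.re b.re with h2 | h2 | h2
    · exact Or.inl (Or.inr ⟨h1, h2⟩)
    · exact absurd (Complex.ext h2 h1) h
    · exact Or.inr (Or.inr ⟨h1.symm, h2⟩)
  · exact Or.inr (Or.inl h1)

lemma cLt_sub_iff {a b : ℂ} : cLt a b ↔ cLt 0 (b - a) := by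
  rw [cLt_iff, cLt_zero_iff]
  simp only [Complex.sub_im, Complex.sub_re]
  constructor
  · rintro (h | ⟨h1, h2⟩); · left; linarith
    · right; constructor <;> linarith
  · rintro (h | ⟨h1, h2⟩); · left; linarith
    · right; constructor <;> linarith

lemma cLt_neg_iff {a : ℂ} : cLt a 0 ↔ cLt 0 (-a) := by
  rw [cLt_zero_iff, zero_cLt_iff]
  simp only [Complex.neg_im, Complex.neg_re]
  constructor
  · rintro (h | ⟨h1, h2⟩); · left; linarith
    · right; constructor <;> linarith
  · rintro (h | ⟨h1, h2⟩); · left; linarith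
    · right; constructor <;> linarith

lemma cLt_add {a b : ℂ} (h1 : cLt 0 a) (h2 : cLt 0 b) : cLt 0 (a + b) := by
  rw [cLt_zero_iff] at *
  simp only [Complex.add_im, Complex.add_re]
  rcases h1 with h1 | ⟨h1, h1'⟩ <;> rcases h2 with h2 | ⟨h2, h2'⟩ <;>
    [left; left; left; right] <;>
    first
      | (constructor <;> linarith)
      | linarith

/-- The cone lemma: if `u` points (weakly) down, `v` points (weakly) up,
and `w` is in the open cone to the left of both, then `w` points up. -/
lemma cLt_cone {u v w : ℂ} (hu : cLt u 0) (hv : cLt 0 v) (huv : 0 < cross u v)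
    (h1 : 0 < cross u w) (h2 : 0 < cross v w) : cLt 0 w := by
  rw [zero_cLt_iff] at hu
  rw [cLt_zero_iff] at hv
  have idIm : cross u v * w.im = cross u w * v.im - cross v w * u.im := by
    simp only [cross_eval]; ring
  have him : 0 < w.im := by
    rcases hu with hu | ⟨hu, hu'⟩
    · rcases hv with hv | ⟨hv, hv'⟩
      · nlinarith [mul_pos h2 (by linarith : (0:ℝ) < -u.im), mul_nonneg h1.le hv.le]
      · nlinarith [mul_pos h2 (by linarith : (0:ℝ) < -u.im)]
    · rcases hv with hv | ⟨hv, hv'⟩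
      · nlinarith [mul_pos h1 hv]
      · exfalso; rw [cross_eval, hu, ← hv] at huv; nlinarith
  exact Or.inl (by simpa using him)

lemma cross_neg_neg (u v : ℂ) : cross (-u) (-v) = cross u v := by
  simp only [cross_eval, Complex.neg_im, Complex.neg_re]; ring

lemma cLt_cone' {u v w : ℂ} (hu : cLt 0 u) (hv : cLt v 0) (huv : 0 < cross u v)
    (h1 : 0 < cross u w) (h2 : 0 < cross v w) : cLt w 0 := by
  have hu' : cLt (-u) 0 := by rw [cLt_neg_iff, neg_neg]; exact hu
  have hv' : cLt 0 (-v) := by rw [← cLt_neg_iff]; exact hv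
  have hc : 0 < cross (-u) (-v) := by rw [cross_neg_neg]; exact huv
  have g1 : 0 < cross (-u) (-w) := by rw [cross_neg_neg]; exact h1
  have g2 : 0 < cross (-v) (-w) := by rw [cross_neg_neg]; exact h2
  have := cLt_cone hu' hv' hc g1 g2
  rw [cLt_neg_iff]; exact this

lemma cross_zero_left (v : ℂ) : cross 0 v = 0 := by simp [cross_eval]
lemma cross_zero_right (u : ℂ) : cross u 0 = 0 := by simp [cross_eval]

lemma zmod_add_ne (j : ZMod 12) {a b : ZMod 12} (h : a ≠ b) : j + a ≠ j + b :=
  fun hh => h (add_left_cancel hh)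

lemma zmod_sub_eq (j : ZMod 12) (a b : ZMod 12) (h : -a = b) : j - a = j + b := by
  rw [sub_eq_add_neg, h]

lemma zmod_succ_ne_self (j : ZMod 12) : j + 1 ≠ j := by
  intro h
  have : (1 : ZMod 12) = 0 := by
    have := add_eq_left.mp h
    exact this
  exact absurd this (by decide)

section Poly
variable {V : ZMod 12 → ℂ} (hC : PosConvex V)
include hC

/-- consecutive edges turn left -/
lemma edge_succ (j : ZMod 12) : 0 < cross (zEdge V j) (zEdge V (j + 1)) := by
  have hne1 : j + 1 ≠ j - 1 := by
    rw [zmod_sub_eq j 1 11 (by decide)]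
    exact zmod_add_ne j (by decide)
  have h := hC j (j + 1) hne1 (zmod_succ_ne_self j)
  simp only [zEdge, add_sub_cancel_right]
  simp only [cross_eval, Complex.sub_re, Complex.sub_im] at h ⊢
  nlinarith [h]

lemma cross_edge_vertex (j i : ZMod 12) (h1 : i ≠ j) (h2 : i ≠ j - 1) :
    0 < cross (zEdge V j) (V i - V j) := by
  have h := hC j i h2 h1
  simp only [zEdge]
  simp only [cross_eval, Complex.sub_re, Complex.sub_im] at h ⊢
  nlinarith [h]

lemma cross_edge_vertex' (j i : ZMod 12) (h1 : i ≠ j) (h2 : i ≠ j + 1) :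
    0 < cross (zEdge V (j + 1)) (V i - V j) := by
  have h := hC (j + 1) i (by rwa [add_sub_cancel_right]) h2
  rw [add_sub_cancel_right] at h
  simp only [zEdge, add_sub_cancel_right]
  exact h

lemma zEdge_ne_zero (j : ZMod 12) : zEdge V j ≠ 0 := by
  intro h
  have := edge_succ hC j
  rw [h, cross_zero_left] at this
  exact lt_irrefl 0 this

lemma vertex_ne (i j : ZMod 12) (h : i ≠ j) : V i ≠ V j := by
  intro he
  by_cases hij : i = j + 1
  · subst hij
    apply zEdge_ne_zero hC (j + 1)
    rw [zEdge, add_sub_cancel_right, he, sub_self]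
  · have := cross_edge_vertex' hC j i h hij
    rw [he, sub_self, cross_zero_right] at this
    exact lt_irrefl 0 this

lemma local_min (t : ZMod 12) (hd : cLt (zEdge V t) 0) (hu : cLt 0 (zEdge V (t + 1)))
    (i : ZMod 12) (h1 : i ≠ t) (h2 : i ≠ t - 1) (h3 : i ≠ t + 1) : cLt (V t) (V i) := by
  rw [cLt_sub_iff]
  exact cLt_cone hd hu (edge_succ hC t) (cross_edge_vertex hC t i h1 h2)
    (cross_edge_vertex' hC t i h1 h3)

lemma local_max (t : ZMod 12) (hu : cLt 0 (zEdge V t)) (hd : cLt (zEdge V (t + 1)) 0)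
    (i : ZMod 12) (h1 : i ≠ t) (h2 : i ≠ t - 1) (h3 : i ≠ t + 1) : cLt (V i) (V t) := by
  have := cLt_cone' hu hd (edge_succ hC t) (cross_edge_vertex hC t i h1 h2)
    (cross_edge_vertex' hC t i h1 h3)
  rw [cLt_neg_iff, neg_sub] at this
  rwa [cLt_sub_iff]

lemma min_trans_unique (t₁ t₂ : ZMod 12)
    (h1d : cLt (zEdge V t₁) 0) (h1u : cLt 0 (zEdge V (t₁ + 1)))
    (h2d : cLt (zEdge V t₂) 0) (h2u : cLt 0 (zEdge V (t₂ + 1))) : t₁ = t₂ := by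
  by_contra hne
  by_cases ha : t₂ = t₁ + 1
  · subst ha; exact cLt_asymm h1u h2d
  by_cases hb : t₁ = t₂ + 1
  · subst hb; exact cLt_asymm h2u h1d
  have c1 : t₂ ≠ t₁ - 1 := fun h => hb (by rw [h]; ring)
  have c2 : t₁ ≠ t₂ - 1 := fun h => ha (by rw [h]; ring)
  exact cLt_asymm (local_min hC t₁ h1d h1u t₂ (Ne.symm hne) c1 ha)
    (local_min hC t₂ h2d h2u t₁ hne c2 hb)

lemma max_trans_unique (t₁ t₂ : ZMod 12)
    (h1u : cLt 0 (zEdge V t₁)) (h1d : cLt (zEdge V (t₁ + 1)) 0)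
    (h2u : cLt 0 (zEdge V t₂)) (h2d : cLt (zEdge V (t₂ + 1)) 0) : t₁ = t₂ := by
  by_contra hne
  by_cases ha : t₂ = t₁ + 1
  · subst ha; exact cLt_asymm h2u h1d
  by_cases hb : t₁ = t₂ + 1
  · subst hb; exact cLt_asymm h1u h2d
  have c1 : t₂ ≠ t₁ - 1 := fun h => hb (by rw [h]; ring)
  have c2 : t₁ ≠ t₂ - 1 := fun h => ha (by rw [h]; ring)
  exact cLt_asymm (local_max hC t₂ h2u h2d t₁ hne c2 hb)
    (local_max hC t₁ h1u h1d t₂ (Ne.symm hne) c1 ha)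

lemma edge_total : zEdge V 0 + zEdge V 1 + zEdge V 2 + zEdge V 3 + zEdge V 4 + zEdge V 5
    + zEdge V 6 + zEdge V 7 + zEdge V 8 + zEdge V 9 + zEdge V 10 + zEdge V 11 = 0 := by
  simp only [zEdge]
  rw [show (0:ZMod 12) - 1 = 11 by decide, show (1:ZMod 12) - 1 = 0 by decide,
    show (2:ZMod 12) - 1 = 1 by decide, show (3:ZMod 12) - 1 = 2 by decide,
    show (4:ZMod 12) - 1 = 3 by decide, show (5:ZMod 12) - 1 = 4 by decide,
    show (6:ZMod 12) - 1 = 5 by decide, show (7:ZMod 12) - 1 = 6 by decide,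
    show (8:ZMod 12) - 1 = 7 by decide, show (9:ZMod 12) - 1 = 8 by decide,
    show (10:ZMod 12) - 1 = 9 by decide, show (11:ZMod 12) - 1 = 10 by decide]
  ring

lemma exists_down : ∃ j : ZMod 12, cLt (zEdge V j) 0 := by
  by_contra h
  push_neg at h
  have hup : ∀ j : ZMod 12, cLt 0 (zEdge V j) := by
    intro j
    rcases cLt_total (zEdge_ne_zero hC j) with hh | hh
    · exact absurd hh (h j)
    · exact hh
  have : cLt 0 (zEdge V 0 + zEdge V 1 + zEdge V 2 + zEdge V 3 + zEdge V 4 + zEdge V 5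
      + zEdge V 6 + zEdge V 7 + zEdge V 8 + zEdge V 9 + zEdge V 10 + zEdge V 11) := by
    repeat' apply cLt_add
    all_goals apply hup
  rw [edge_total hC] at this
  exact cLt_irrefl 0 this

lemma exists_up : ∃ j : ZMod 12, cLt 0 (zEdge V j) := by
  by_contra h
  push_neg at h
  have hdn : ∀ j : ZMod 12, cLt (zEdge V j) 0 := by
    intro j
    rcases cLt_total (zEdge_ne_zero hC j) with hh | hh
    · exact hh
    · exact absurd hh (h j)
  have : cLt 0 (-(zEdge V 0) + -(zEdge V 1) + -(zEdge V 2) + -(zEdge V 3) + -(zEdge V 4)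
      + -(zEdge V 5) + -(zEdge V 6) + -(zEdge V 7) + -(zEdge V 8) + -(zEdge V 9)
      + -(zEdge V 10) + -(zEdge V 11)) := by
    repeat' apply cLt_add
    all_goals (rw [← cLt_neg_iff]; apply hdn)
  have h0 : -(zEdge V 0) + -(zEdge V 1) + -(zEdge V 2) + -(zEdge V 3) + -(zEdge V 4)
      + -(zEdge V 5) + -(zEdge V 6) + -(zEdge V 7) + -(zEdge V 8) + -(zEdge V 9)
      + -(zEdge V 10) + -(zEdge V 11) = 0 := by
    have := edge_total hC
    linear_combination -this
  rw [h0] at this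
  exact cLt_irrefl 0 this

lemma exists_min_transition : ∃ m : ZMod 12, cLt (zEdge V m) 0 ∧ cLt 0 (zEdge V (m + 1)) := by
  by_contra h
  push_neg at h
  have prop : ∀ m : ZMod 12, cLt (zEdge V m) 0 → cLt (zEdge V (m + 1)) 0 := by
    intro m hm
    rcases cLt_total (zEdge_ne_zero hC (m + 1)) with hh | hh
    · exact hh
    · exact absurd hh (h m hm)
  obtain ⟨j, hj⟩ := exists_down hC
  have all : ∀ n : ℕ, cLt (zEdge V (j + (n : ZMod 12))) 0 := by
    intro n
    induction n with
    | zero => simpa using hj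
    | succ k ih =>
      have := prop _ ih
      rwa [show (((k+1) : ℕ) : ZMod 12) = ((k : ℕ) : ZMod 12) + 1 from by push_cast; ring,
        ← add_assoc]
  obtain ⟨k, hk⟩ := exists_up hC
  have hkj : k = j + (((k - j).val : ℕ) : ZMod 12) := by
    rw [ZMod.natCast_zmod_val]; ring
  rw [hkj] at hk
  exact cLt_asymm hk (all (k - j).val)

lemma exists_max_transition : ∃ m : ZMod 12, cLt 0 (zEdge V m) ∧ cLt (zEdge V (m + 1)) 0 := by
  by_contra h
  push_neg at h
  have prop : ∀ m : ZMod 12, cLt 0 (zEdge V m) → cLt 0 (zEdge V (m + 1)) := by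
    intro m hm
    rcases cLt_total (zEdge_ne_zero hC (m + 1)) with hh | hh
    · exact absurd hm (h m · hh)
    · exact hh
  obtain ⟨j, hj⟩ := exists_up hC
  have all : ∀ n : ℕ, cLt 0 (zEdge V (j + (n : ZMod 12))) := by
    intro n
    induction n with
    | zero => simpa using hj
    | succ k ih =>
      have := prop _ ih
      rwa [show (((k+1) : ℕ) : ZMod 12) = ((k : ℕ) : ZMod 12) + 1 from by push_cast; ring,
        ← add_assoc]
  obtain ⟨k, hk⟩ := exists_down hC
  have hkj : k = j + (((k - j).val : ℕ) : ZMod 12) := by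
    rw [ZMod.natCast_zmod_val]; ring
  rw [hkj] at hk
  exact cLt_asymm (all (k - j).val) hk

end Poly

section Chains
variable {V : ZMod 12 → ℂ}

lemma chainUp (a : ZMod 12) (n : ℕ) (hn : 1 ≤ n)
    (h : ∀ k : ℕ, 1 ≤ k → k ≤ n → cLt 0 (zEdge V (a + (k : ZMod 12)))) :
    cLt (V a) (V (a + (n : ZMod 12))) := by
  induction n, hn using Nat.le_induction with
  | base =>
    have h1 := h 1 le_rfl le_rfl
    simp only [Nat.cast_one, zEdge, add_sub_cancel_right] at h1 ⊢
    exact cLt_sub_iff.mpr h1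
  | succ n hn ih =>
    have ihh := ih (fun k h1 h2 => h k h1 (by omega))
    have hl := h (n+1) (by omega) le_rfl
    have hcast : ((n+1 : ℕ) : ZMod 12) = (n : ZMod 12) + 1 := by push_cast; ring
    rw [hcast, ← add_assoc] at hl ⊢
    simp only [zEdge, add_sub_cancel_right] at hl
    exact cLt_trans ihh (cLt_sub_iff.mpr hl)

lemma chainDown (a : ZMod 12) (n : ℕ) (hn : 1 ≤ n)
    (h : ∀ k : ℕ, 1 ≤ k → k ≤ n → cLt (zEdge V (a + 1 - (k : ZMod 12))) 0) :
    cLt (V a) (V (a - (n : ZMod 12))) := by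
  induction n, hn using Nat.le_induction with
  | base =>
    have h1 := h 1 le_rfl le_rfl
    rw [Nat.cast_one, add_sub_cancel_right] at h1
    rw [Nat.cast_one]
    simp only [zEdge] at h1
    have := cLt_neg_iff.mp h1
    rw [neg_sub] at this
    exact cLt_sub_iff.mpr this
  | succ n hn ih =>
    have ihh := ih (fun k h1 h2 => h k h1 (by omega))
    have hl := h (n+1) (by omega) le_rfl
    have hidx : a + 1 - ((n+1 : ℕ) : ZMod 12) = a - (n : ZMod 12) := by push_cast; ring
    rw [hidx] at hl
    simp only [zEdge] at hl
    have hl2 := cLt_neg_iff.mp hl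
    rw [neg_sub] at hl2
    have step := cLt_sub_iff.mpr hl2
    have hidx2 : a - (n : ZMod 12) - 1 = a - ((n+1 : ℕ) : ZMod 12) := by push_cast; ring
    rw [hidx2] at step
    exact cLt_trans ihh step

end Chains

lemma zmod_add_ne_self (j : ZMod 12) {a : ZMod 12} (h : a ≠ 0) : j + a ≠ j :=
  fun hh => h (by have := hh; nth_rewrite 2 [← add_zero j] at this; exact add_left_cancel this)

/-- The key E6 inequality: the two 3-step diagonals at any vertex turn left. -/
lemma keyT {V : ZMod 12 → ℂ} (hE : IsE6Gon V) (hCx : PosConvex V) (t : ZMod 12) :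
    0 < cross (V t - V (t - 3)) (V (t + 3) - V t) := by
  -- normalized E6 relations
  have hA : zEdge V t + zEdge V (t+4) + zEdge V (t+8) = 0 := (hE t).1
  have hB : zEdge V (t+1) + zEdge V (t+5) + zEdge V (t+9) = 0 := by
    have := (hE (t+1)).1
    rwa [show t+1+4 = t+5 by ring, show t+1+8 = t+9 by ring] at this
  have hC2 : zEdge V (t+2) + zEdge V (t+6) + zEdge V (t+10) = 0 := by
    have := (hE (t+2)).1
    rwa [show t+2+4 = t+6 by ring, show t+2+8 = t+10 by ring] at this
  have hD : zEdge V (t+3) + zEdge V (t+7) + zEdge V (t+11) = 0 := by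
    have := (hE (t+3)).1
    rwa [show t+3+4 = t+7 by ring, show t+3+8 = t+11 by ring] at this
  have hX : zEdge V t - zEdge V (t+9) + zEdge V (t+6) - zEdge V (t+3) = 0 := by
    have := (hE t).2
    rwa [zmod_sub_eq t 3 9 (by decide), zmod_sub_eq t 6 6 (by decide),
      zmod_sub_eq t 9 3 (by decide)] at this
  have hY : zEdge V (t+1) - zEdge V (t+10) + zEdge V (t+7) - zEdge V (t+4) = 0 := by
    have := (hE (t+1)).2
    rwa [show t+1-3 = t+10 by rw [add_sub_assoc]; congr 1,
      show t+1-6 = t+7 by rw [add_sub_assoc]; congr 1,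
      show t+1-9 = t+4 by rw [add_sub_assoc]; congr 1] at this
  -- solve for the six "early" edges in terms of the later ones
  have hz0 : zEdge V t = -zEdge V (t+6) - zEdge V (t+7) + zEdge V (t+9) - zEdge V (t+11) := by
    linear_combination hD + hX
  have hz1 : zEdge V (t+1) = zEdge V (t+6) - zEdge V (t+8) - zEdge V (t+9) + zEdge V (t+10)
      + zEdge V (t+11) := by linear_combination hA - hD - hX + hY
  have hz2 : zEdge V (t+2) = -zEdge V (t+6) - zEdge V (t+10) := by linear_combination hC2
  have hz3 : zEdge V (t+3) = -zEdge V (t+7) - zEdge V (t+11) := by linear_combination hD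
  have hz4 : zEdge V (t+4) = zEdge V (t+6) + zEdge V (t+7) - zEdge V (t+8) - zEdge V (t+9)
      + zEdge V (t+11) := by linear_combination hA - hD - hX
  have hz5 : zEdge V (t+5) = -zEdge V (t+6) + zEdge V (t+8) - zEdge V (t+10)
      - zEdge V (t+11) := by linear_combination -hA + hB + hD + hX - hY
  -- telescoping of vertex differences into edges
  have i1 : t + 1 - 1 = t := by rw [add_sub_cancel_right]
  have i2 : t + 2 - 1 = t + 1 := by rw [add_sub_assoc]; norm_num
  have i3 : t + 3 - 1 = t + 2 := by rw [add_sub_assoc]; norm_num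
  have i4 : t + 4 - 1 = t + 3 := by rw [add_sub_assoc]; norm_num
  have i5 : t + 5 - 1 = t + 4 := by rw [add_sub_assoc]; norm_num
  have i6 : t + 6 - 1 = t + 5 := by rw [add_sub_assoc]; norm_num
  have i10 : t + 10 - 1 = t + 9 := by rw [add_sub_assoc]; norm_num
  have i11 : t + 11 - 1 = t + 10 := by rw [add_sub_assoc]; norm_num
  have i0 : t - 1 = t + 11 := zmod_sub_eq t 1 11 (by decide)
  have du : V t - V (t + 9) =
      -zEdge V (t+6) - zEdge V (t+7) + zEdge V (t+9) + zEdge V (t+10) := by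
    have tel : V t - V (t + 9) = zEdge V (t+10) + zEdge V (t+11) + zEdge V t := by
      simp only [zEdge, i10, i11, i0]; ring
    rw [tel, hz0]; ring
  have dv : V (t + 3) - V t = -zEdge V (t+7) - zEdge V (t+8) - zEdge V (t+9) := by
    have tel : V (t+3) - V t = zEdge V (t+1) + zEdge V (t+2) + zEdge V (t+3) := by
      simp only [zEdge, i1, i2, i3]; ring
    rw [tel, hz1, hz2, hz3]; ring
  have e0 : V t - V (t + 11) =
      -zEdge V (t+6) - zEdge V (t+7) + zEdge V (t+9) - zEdge V (t+11) := by
    have tel : V t - V (t + 11) = zEdge V t := by simp only [zEdge, i0]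
    rw [tel, hz0]
  have e1 : V (t + 2) - V (t + 11) = -zEdge V (t+6) - zEdge V (t+7) - zEdge V (t+8) := by
    have tel : V (t+2) - V (t+11) = zEdge V t + zEdge V (t+1) + zEdge V (t+2) := by
      simp only [zEdge, i0, i1, i2]; ring
    rw [tel, hz0, hz1, hz2]; ring
  have e2 : V (t + 1) - V t = zEdge V (t+6) - zEdge V (t+8) - zEdge V (t+9) + zEdge V (t+10)
      + zEdge V (t+11) := by
    have tel : V (t+1) - V t = zEdge V (t+1) := by simp only [zEdge, i1]
    rw [tel, hz1]
  have e3 : V (t + 4) - V t = zEdge V (t+6) - zEdge V (t+8) - zEdge V (t+8) - zEdge V (t+9)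
      - zEdge V (t+9) + zEdge V (t+11) := by
    have tel : V (t+4) - V t = zEdge V (t+1) + zEdge V (t+2) + zEdge V (t+3)
        + zEdge V (t+4) := by
      simp only [zEdge, i1, i2, i3, i4]; ring
    rw [tel, hz1, hz2, hz3, hz4]; ring
  have e4 : V (t + 2) - V (t + 1) = -zEdge V (t+6) - zEdge V (t+10) := by
    have tel : V (t+2) - V (t+1) = zEdge V (t+2) := by simp only [zEdge, i2]
    rw [tel, hz2]
  have e5 : V (t + 4) - V (t + 1) = -zEdge V (t+8) - zEdge V (t+9) - zEdge V (t+10) := by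
    have tel : V (t+4) - V (t+1) = zEdge V (t+2) + zEdge V (t+3) + zEdge V (t+4) := by
      simp only [zEdge, i2, i3, i4]; ring
    rw [tel, hz2, hz3, hz4]; ring
  have e6 : V (t + 3) - V (t + 2) = -zEdge V (t+7) - zEdge V (t+11) := by
    have tel : V (t+3) - V (t+2) = zEdge V (t+3) := by simp only [zEdge, i3]
    rw [tel, hz3]
  have e7 : V (t + 6) - V (t + 2) = zEdge V (t+6) - zEdge V (t+9) - zEdge V (t+10)
      - zEdge V (t+11) := by
    have tel : V (t+6) - V (t+2) = zEdge V (t+3) + zEdge V (t+4) + zEdge V (t+5)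
        + zEdge V (t+6) := by
      simp only [zEdge, i3, i4, i5, i6]; ring
    rw [tel, hz3, hz4, hz5]; ring
  -- the four convexity facts from the certificate
  have R1 := hCx t (t+2) (by rw [i0]; exact zmod_add_ne t (by decide))
    (zmod_add_ne_self t (by decide))
  rw [i0, e0, e1] at R1
  have R2 := hCx (t+1) (t+4) (by rw [i1]; exact zmod_add_ne_self t (by decide))
    (zmod_add_ne t (by decide))
  rw [i1, e2, e3] at R2
  have R3 := hCx (t+2) (t+4) (by rw [i2]; exact zmod_add_ne t (by decide))
    (zmod_add_ne t (by decide))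
  rw [i2, e4, e5] at R3
  have R4 := hCx (t+3) (t+6) (by rw [i3]; exact zmod_add_ne t (by decide))
    (zmod_add_ne t (by decide))
  rw [i3, e6, e7] at R4
  rw [zmod_sub_eq t 3 9 (by decide), du, dv]
  simp only [cross_eval, Complex.add_re, Complex.add_im, Complex.sub_re, Complex.sub_im,
    Complex.neg_re, Complex.neg_im] at R1 R2 R3 R4 ⊢
  linarith [R1, R2, R3, R4]

lemma below_W {V : ZMod 12 → ℂ} (hE : IsE6Gon V) (hCx : PosConvex V) (k t : ZMod 12)
    (hW : WE6 V k ∈ DiagGon V 3)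
    (h1 : cLt (V t) (V (t - 3))) (h2 : cLt (V t) (V (t + 3))) :
    cLt (V t) (WE6 V k) := by
  have hW' : ∀ j : ZMod 12, 0 < cross (V (j + 3) - V j) (WE6 V k - V j) := by
    intro j
    have := hW j
    rwa [show (((3:ℕ)) : ZMod 12) = 3 by norm_num] at this
  have c2 : 0 < cross (V (t+3) - V t) (WE6 V k - V t) := hW' t
  have c1' := hW' (t - 3)
  rw [show t - 3 + 3 = t by ring] at c1'
  have c1 : 0 < cross (V t - V (t-3)) (WE6 V k - V t) := by
    simp only [cross_eval, Complex.sub_re, Complex.sub_im] at c1' ⊢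
    nlinarith [c1']
  have hu : cLt (V t - V (t-3)) 0 := by
    rw [cLt_neg_iff, neg_sub]; exact cLt_sub_iff.mp h1
  have hv : cLt 0 (V (t+3) - V t) := cLt_sub_iff.mp h2
  have := cLt_cone hu hv (keyT hE hCx t) c1 c2
  exact cLt_sub_iff.mpr this

lemma notMem_triple (m : ZMod 12) {c : ZMod 12} (h0 : c ≠ 0) (h1 : c ≠ 1) (h2 : c ≠ 2) :
    m + c ∉ ({m, m + 1, m + 2} : Set (ZMod 12)) := by
  simp only [Set.mem_insert_iff, Set.mem_singleton_iff]
  push_neg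
  exact ⟨zmod_add_ne_self m h0, zmod_add_ne m h1, zmod_add_ne m h2⟩

lemma wrap {V : ZMod 12 → ℂ} (hE : IsE6Gon V) (hCx : PosConvex V)
    (hW : ∀ j : ZMod 12, WE6 V j ∈ DiagGon V 3) (m : ZMod 12)
    (vp : ∀ t ∈ ({m, m + 1, m + 2} : Set (ZMod 12)),
      ∀ i ∉ ({m, m + 1, m + 2} : Set (ZMod 12)), cLt (V t) (V i)) :
    ∀ t ∈ ({m, m + 1, m + 2} : Set (ZMod 12)),
      (∀ k : ZMod 12, cLt (V t) (WE6 V k)) ∧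
      (∀ i ∉ ({m, m + 1, m + 2} : Set (ZMod 12)), cLt (V t) (V i)) := by
  intro t ht
  refine ⟨fun k => ?_, vp t ht⟩
  have hm3 : t - 3 ∉ ({m, m + 1, m + 2} : Set (ZMod 12)) := by
    simp only [Set.mem_insert_iff, Set.mem_singleton_iff] at ht
    rcases ht with h | h | h <;> rw [h]
    · rw [zmod_sub_eq m 3 9 (by decide)]
      exact notMem_triple m (by decide) (by decide) (by decide)
    · rw [show m + 1 - 3 = m + 10 by rw [add_sub_assoc]; congr 1]
      exact notMem_triple m (by decide) (by decide) (by decide)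
    · rw [show m + 2 - 3 = m + 11 by rw [add_sub_assoc]; congr 1]
      exact notMem_triple m (by decide) (by decide) (by decide)
  have hp3 : t + 3 ∉ ({m, m + 1, m + 2} : Set (ZMod 12)) := by
    simp only [Set.mem_insert_iff, Set.mem_singleton_iff] at ht
    rcases ht with h | h | h <;> rw [h]
    · rw [show m + 3 = m + 3 from rfl]
      exact notMem_triple m (by decide) (by decide) (by decide)
    · rw [show m + 1 + 3 = m + 4 by ring]
      exact notMem_triple m (by decide) (by decide) (by decide)
    · rw [show m + 2 + 3 = m + 5 by ring]
      exact notMem_triple m (by decide) (by decide) (by decide)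
  exact below_W hE hCx k t (hW k) (vp t ht _ hm3) (vp t ht _ hp3)

/-- (§4.3.) In a stable 12-gon of type `E6`, the three smallest of the 24 points
`{V j} ∪ {W j}` are three consecutive vertices: there is `m` such that each of
`V m, V (m+1), V (m+2)` is smaller than every `W k` and than every other vertex. -/
theorem e6_three_smallest_consecutive (V : ZMod 12 → ℂ) (hV : IsStableE6Gon V) :
    ∃ m : ZMod 12, ∀ t : ZMod 12, t ∈ ({m, m + 1, m + 2} : Set (ZMod 12)) →
      (∀ k : ZMod 12, cLt (V t) (WE6 V k)) ∧
      (∀ i : ZMod 12, i ∉ ({m, m + 1, m + 2} : Set (ZMod 12)) → cLt (V t) (V i)) := by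
  obtain ⟨hE, hCx, hWall⟩ := hV
  obtain ⟨m₀, hm₀d, hm₀u⟩ := exists_min_transition hCx
  obtain ⟨M, hMu, hMd⟩ := exists_max_transition hCx
  set r := (M - m₀).val with hrdef
  have hrM : m₀ + ((r : ℕ) : ZMod 12) = M := by rw [hrdef, ZMod.natCast_zmod_val]; ring
  have hrlt : r < 12 := ZMod.val_lt _
  have hrpos : 1 ≤ r := by
    by_contra h
    have hr0 : r = 0 := by omega
    rw [hr0] at hrM
    simp only [Nat.cast_zero, add_zero] at hrM
    rw [← hrM] at hMu
    exact cLt_asymm hMu hm₀d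
  have cast_inj : ∀ n c : ℕ, n < 12 → c < 12 → ((n : ZMod 12) = (c : ZMod 12)) → n = c := by
    intro n c hn hc h
    have := congrArg ZMod.val h
    rwa [ZMod.val_natCast_of_lt hn, ZMod.val_natCast_of_lt hc] at this
  have upRun : ∀ k : ℕ, 1 ≤ k → k ≤ r → cLt 0 (zEdge V (m₀ + (k : ZMod 12))) := by
    intro k
    induction k with
    | zero => intro h; exact absurd h (by omega)
    | succ n ih =>
      intro h1 h2
      rcases Nat.eq_zero_or_pos n with hn0 | hn
      · subst hn0; simpa using hm₀u
      · have hup := ih (by omega) (by omega)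
        have hne : m₀ + (n : ZMod 12) ≠ M := by
          intro hcontra
          rw [← hrM] at hcontra
          have hnr := cast_inj n r (by omega) hrlt (add_left_cancel hcontra)
          omega
        rcases cLt_total (zEdge_ne_zero hCx (m₀ + (n : ZMod 12) + 1)) with hdn | hup2
        · exact absurd (max_trans_unique hCx _ _ hup hdn hMu hMd) hne
        · rwa [show ((n + 1 : ℕ) : ZMod 12) = ((n : ℕ) : ZMod 12) + 1 by push_cast; ring,
            ← add_assoc]
  have downRun : ∀ l : ℕ, r + 1 ≤ l → l ≤ 12 → cLt (zEdge V (m₀ + (l : ZMod 12))) 0 := by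
    intro l hl
    induction l, hl using Nat.le_induction with
    | base =>
      intro _
      have hb : m₀ + ((r + 1 : ℕ) : ZMod 12) = M + 1 := by rw [← hrM]; push_cast; ring
      rw [hb]; exact hMd
    | succ n hn ih =>
      intro h12
      have hdn := ih (by omega)
      have hne0 : m₀ + (n : ZMod 12) ≠ m₀ := by
        apply zmod_add_ne_self
        intro h0
        have : n = 0 := by
          have := congrArg ZMod.val h0
          rwa [ZMod.val_natCast_of_lt (by omega), ZMod.val_zero] at this
        omega
      rcases cLt_total (zEdge_ne_zero hCx (m₀ + (n : ZMod 12) + 1)) with hdn2 | hup2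
      · rwa [show ((n + 1 : ℕ) : ZMod 12) = ((n : ℕ) : ZMod 12) + 1 by push_cast; ring,
          ← add_assoc]
      · exact absurd (min_trans_unique hCx _ _ hdn hup2 hm₀d hm₀u) hne0
  have cmp_up : ∀ s n : ℕ, s < n → n ≤ r →
      cLt (V (m₀ + (s : ZMod 12))) (V (m₀ + (n : ZMod 12))) := by
    intro s n hsn hnr
    have hchain := chainUp (V := V) (m₀ + (s : ZMod 12)) (n - s) (by omega) (by
      intro k hk1 hk2
      rw [show m₀ + (s : ZMod 12) + (k : ZMod 12) = m₀ + ((s + k : ℕ) : ZMod 12) by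
        push_cast; ring]
      exact upRun (s + k) (by omega) (by omega))
    rwa [show m₀ + (s : ZMod 12) + ((n - s : ℕ) : ZMod 12) = m₀ + (n : ZMod 12) by
      push_cast [Nat.cast_sub hsn.le]; ring] at hchain
  have cmp_down : ∀ s q : ℕ, s < q → q ≤ 12 - r →
      cLt (V (m₀ - (s : ZMod 12))) (V (m₀ - (q : ZMod 12))) := by
    intro s q hsq hqr
    have hchain := chainDown (V := V) (m₀ - (s : ZMod 12)) (q - s) (by omega) (by
      intro k hk1 hk2
      rw [show m₀ - (s : ZMod 12) + 1 - (k : ZMod 12)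
          = m₀ + ((12 - (s + k - 1) : ℕ) : ZMod 12) by
        push_cast [Nat.cast_sub (show s + k - 1 ≤ 12 by omega)]
        rw [show (12 : ZMod 12) = 0 by decide]
        push_cast [Nat.cast_sub (show 1 ≤ s + k by omega)]
        ring]
      exact downRun _ (by omega) (by omega))
    rwa [show m₀ - (s : ZMod 12) - ((q - s : ℕ) : ZMod 12) = m₀ - (q : ZMod 12) by
      push_cast [Nat.cast_sub hsq.le]; ring] at hchain
  have eMinus : cLt (V m₀) (V (m₀ - 1)) := by
    have hd := hm₀d
    simp only [zEdge] at hd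
    have h2 := cLt_neg_iff.mp hd
    rw [neg_sub] at h2
    exact cLt_sub_iff.mpr h2
  have flip : ∀ n : ℕ, n ≤ 12 → m₀ + (n : ZMod 12) = m₀ - ((12 - n : ℕ) : ZMod 12) := by
    intro n h
    have h2 : ((12 - n : ℕ) : ZMod 12) = 12 - (n : ZMod 12) := by
      push_cast [Nat.cast_sub h]; ring
    rw [h2, show (12 : ZMod 12) = 0 by decide]; ring
  have locate : ∀ i : ZMod 12, ∃ n : ℕ, n < 12 ∧ i = m₀ + (n : ZMod 12) := by
    intro i
    exact ⟨(i - m₀).val, ZMod.val_lt _, by rw [ZMod.natCast_zmod_val]; ring⟩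
  -- case split on the shape of the bottom
  have hne1 : V (m₀ + 1) ≠ V (m₀ - 1) := by
    apply vertex_ne hCx
    rw [zmod_sub_eq m₀ 1 11 (by decide)]
    exact zmod_add_ne m₀ (by decide)
  rcases cLt_total hne1 with hA | hB
  · -- V (m₀+1) < V (m₀-1)
    have hne2 : V (m₀ + 2) ≠ V (m₀ - 1) := by
      apply vertex_ne hCx
      rw [zmod_sub_eq m₀ 1 11 (by decide)]
      exact zmod_add_ne m₀ (by decide)
    rcases cLt_total hne2 with hA1 | hA2
    · -- case A1 : m = m₀
      refine ⟨m₀, wrap hE hCx hWall m₀ ?_⟩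
      intro t ht i hi
      obtain ⟨n, hn12, rfl⟩ := locate i
      simp only [Set.mem_insert_iff, Set.mem_singleton_iff] at hi ht
      push_neg at hi
      obtain ⟨hx0, hx1, hx2⟩ := hi
      have hn0 : n ≠ 0 := by rintro rfl; exact hx0 (by simp)
      have hn1 : n ≠ 1 := by rintro rfl; exact hx1 (by simp)
      have hn2 : n ≠ 2 := by rintro rfl; exact hx2 (by norm_num)
      by_cases hnr : n ≤ r
      · rcases ht with h | h | h <;> rw [h]
        · simpa using cmp_up 0 n (by omega) hnr
        · simpa using cmp_up 1 n (by omega) hnr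
        · simpa using cmp_up 2 n (by omega) hnr
      · push_neg at hnr
        rw [flip n (by omega)]
        by_cases h11 : n = 11
        · subst h11
          rcases ht with h | h | h <;> rw [h]
          · simpa using eMinus
          · simpa using hA
          · simpa using hA1
        · rcases ht with h | h | h <;> rw [h]
          · exact cLt_trans eMinus (by simpa using cmp_down 1 (12 - n) (by omega) (by omega))
          · exact cLt_trans hA (by simpa using cmp_down 1 (12 - n) (by omega) (by omega))
          · exact cLt_trans hA1 (by simpa using cmp_down 1 (12 - n) (by omega) (by omega))
    · -- case A2 : m = m₀ - 1
      refine ⟨m₀ - 1, wrap hE hCx hWall (m₀ - 1) ?_⟩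
      rw [show m₀ - 1 + 1 = m₀ by ring, show m₀ - 1 + 2 = m₀ + 1 by ring]
      intro t ht i hi
      obtain ⟨n, hn12, rfl⟩ := locate i
      simp only [Set.mem_insert_iff, Set.mem_singleton_iff] at hi ht
      push_neg at hi
      obtain ⟨hxm, hx0, hx1⟩ := hi
      have hn0 : n ≠ 0 := by rintro rfl; exact hx0 (by simp)
      have hn1 : n ≠ 1 := by rintro rfl; exact hx1 (by simp)
      have hn11 : n ≠ 11 := by
        rintro rfl
        exact hxm (by rw [show ((11 : ℕ) : ZMod 12) = -1 by decide]; ring)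
      by_cases hnr : n ≤ r
      · rcases ht with h | h | h <;> rw [h]
        · by_cases hn2 : n = 2
          · subst hn2; simpa using hA2
          · exact cLt_trans hA2 (by simpa using cmp_up 2 n (by omega) hnr)
        · simpa using cmp_up 0 n (by omega) hnr
        · simpa using cmp_up 1 n (by omega) hnr
      · push_neg at hnr
        rw [flip n (by omega)]
        rcases ht with h | h | h <;> rw [h]
        · simpa using cmp_down 1 (12 - n) (by omega) (by omega)
        · exact cLt_trans eMinus (by simpa using cmp_down 1 (12 - n) (by omega) (by omega))
        · exact cLt_trans hA (by simpa using cmp_down 1 (12 - n) (by omega) (by omega))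
  · -- V (m₀-1) < V (m₀+1)
    have hne3 : V (m₀ - 2) ≠ V (m₀ + 1) := by
      apply vertex_ne hCx
      rw [zmod_sub_eq m₀ 2 10 (by decide)]
      exact Ne.symm (zmod_add_ne m₀ (by decide))
    rcases cLt_total hne3 with hB1 | hB2
    · -- case B1 : m = m₀ - 2
      refine ⟨m₀ - 2, wrap hE hCx hWall (m₀ - 2) ?_⟩
      rw [show m₀ - 2 + 1 = m₀ - 1 by ring, show m₀ - 2 + 2 = m₀ by ring]
      intro t ht i hi
      obtain ⟨n, hn12, rfl⟩ := locate i
      simp only [Set.mem_insert_iff, Set.mem_singleton_iff] at hi ht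
      push_neg at hi
      obtain ⟨hxm2, hxm1, hx0⟩ := hi
      have hn0 : n ≠ 0 := by rintro rfl; exact hx0 (by simp)
      have hn10 : n ≠ 10 := by
        rintro rfl
        exact hxm2 (by rw [show ((10 : ℕ) : ZMod 12) = -2 by decide]; ring)
      have hn11 : n ≠ 11 := by
        rintro rfl
        exact hxm1 (by rw [show ((11 : ℕ) : ZMod 12) = -1 by decide]; ring)
      by_cases hnr : n ≤ r
      · rcases ht with h | h | h <;> rw [h]
        · by_cases hn1 : n = 1
          · subst hn1; simpa using hB1
          · exact cLt_trans hB1 (by simpa using cmp_up 1 n (by omega) hnr)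
        · by_cases hn1 : n = 1
          · subst hn1; simpa using hB
          · exact cLt_trans hB (by simpa using cmp_up 1 n (by omega) hnr)
        · simpa using cmp_up 0 n (by omega) hnr
      · push_neg at hnr
        rw [flip n (by omega)]
        rcases ht with h | h | h <;> rw [h]
        · simpa using cmp_down 2 (12 - n) (by omega) (by omega)
        · simpa using cmp_down 1 (12 - n) (by omega) (by omega)
        · exact cLt_trans eMinus (by simpa using cmp_down 1 (12 - n) (by omega) (by omega))
    · -- case B2 : m = m₀ - 1
      refine ⟨m₀ - 1, wrap hE hCx hWall (m₀ - 1) ?_⟩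
      rw [show m₀ - 1 + 1 = m₀ by ring, show m₀ - 1 + 2 = m₀ + 1 by ring]
      intro t ht i hi
      obtain ⟨n, hn12, rfl⟩ := locate i
      simp only [Set.mem_insert_iff, Set.mem_singleton_iff] at hi ht
      push_neg at hi
      obtain ⟨hxm, hx0, hx1⟩ := hi
      have hn0 : n ≠ 0 := by rintro rfl; exact hx0 (by simp)
      have hn1 : n ≠ 1 := by rintro rfl; exact hx1 (by simp)
      have hn11 : n ≠ 11 := by
        rintro rfl
        exact hxm (by rw [show ((11 : ℕ) : ZMod 12) = -1 by decide]; ring)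
      by_cases hnr : n ≤ r
      · rcases ht with h | h | h <;> rw [h]
        · exact cLt_trans hB (by simpa using cmp_up 1 n (by omega) hnr)
        · simpa using cmp_up 0 n (by omega) hnr
        · simpa using cmp_up 1 n (by omega) hnr
      · push_neg at hnr
        rw [flip n (by omega)]
        rcases ht with h | h | h <;> rw [h]
        · simpa using cmp_down 1 (12 - n) (by omega) (by omega)
        · exact cLt_trans eMinus (by simpa using cmp_down 1 (12 - n) (by omega) (by omega))
        · by_cases h10 : n = 10
          · subst h10; simpa using hB2
          · exact cLt_trans hB2 (by simpa using cmp_down 2 (12 - n) (by omega) (by omega))
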